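/- Let canon(x,y) denote the canonical alignment of x and y, defined as the optimal spanning path of Grid(x,y) that is lexicographically maximum with respect to its sequence of edge types ordered by vertical > diagonal > horizontal. If a box I×J is compatible with canon(x,y), then the restriction of canon(x,y) to I×J equals the canonical alignment of the subgrid Grid_{I×J}(x,y). -/

import Mathlib

/-- A single step in the edit-distance grid: horizontal, vertical, or diagonal. -/
def GridStep (p q : ℕ × ℕ) : Prop :=
  (q.1 = p.1 + 1 ∧ q.2 = p.2) ∨ (q.1 = p.1 ∧ q.2 = p.2 + 1) ∨
    (q.1 = p.1 + 1 ∧ q.2 = p.2 + 1)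

/-- The list of (directed) edges of a path given as a list of vertices. -/
def pathEdges (P : List (ℕ × ℕ)) : List ((ℕ × ℕ) × (ℕ × ℕ)) := P.zip P.tail

/-- A spanning path (alignment) of `Grid(x,y)`. -/
def IsSpanningPath (m n : ℕ) (P : List (ℕ × ℕ)) : Prop :=
  P.head? = some (0, 0) ∧ P.getLast? = some (m, n) ∧ P.Chain' GridStep

/-- An edge is costly unless it is a diagonal edge `(i,j) → (i+1,j+1)` with
`x_{i+1} = y_{j+1}`. -/
def IsCostly {α : Type*} (x y : List α) (e : (ℕ × ℕ) × (ℕ × ℕ)) : Prop :=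
  ¬ (e.2.1 = e.1.1 + 1 ∧ e.2.2 = e.1.2 + 1 ∧ x[e.1.1]? = y[e.1.2]?)

instance {α : Type*} [DecidableEq α] (x y : List α) (e : (ℕ × ℕ) × (ℕ × ℕ)) :
    Decidable (IsCostly x y e) := by unfold IsCostly; infer_instance

/-- The cost of a path: its number of costly edges. -/
def pathCost {α : Type*} [DecidableEq α] (x y : List α) (P : List (ℕ × ℕ)) : ℕ :=
  (pathEdges P).countP (fun e => decide (IsCostly x y e))

/-- The type of an edge, encoded so that `vertical (2) > diagonal (1) > horizontal (0)`. -/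
def edgeType (e : (ℕ × ℕ) × (ℕ × ℕ)) : ℕ :=
  if e.2.1 = e.1.1 ∧ e.2.2 = e.1.2 + 1 then 2
  else if e.2.1 = e.1.1 + 1 ∧ e.2.2 = e.1.2 + 1 then 1
  else 0

/-- The sequence of edge types of a path. -/
def typeSeq (P : List (ℕ × ℕ)) : List ℕ := (pathEdges P).map edgeType

/-- `P` is the canonical alignment of `x` and `y`: an optimal (minimum-cost) spanning
path whose type sequence is lexicographically maximum (w.r.t. vertical > diagonal >
horizontal) among optimal spanning paths. -/
def IsCanonical {α : Type*} [DecidableEq α] (x y : List α) (P : List (ℕ × ℕ)) : Prop :=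
  IsSpanningPath x.length y.length P ∧
  (∀ Q, IsSpanningPath x.length y.length Q → pathCost x y P ≤ pathCost x y Q) ∧
  (∀ Q, IsSpanningPath x.length y.length Q → pathCost x y Q = pathCost x y P →
    typeSeq Q = typeSeq P ∨ List.Lex (· < ·) (typeSeq Q) (typeSeq P))

/-- The restriction of a path `P` to the box `(a,b] × (c,d]`, shifted so that it becomes
a path of the grid of the substrings `x_{(a,b]}` and `y_{(c,d]}`. -/
def restrictShift (a b c d : ℕ) (P : List (ℕ × ℕ)) : List (ℕ × ℕ) :=
  (P.filter (fun p => decide (a ≤ p.1 ∧ p.1 ≤ b ∧ c ≤ p.2 ∧ p.2 ≤ d))).map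
    (fun p => (p.1 - a, p.2 - c))

/-!
A spanning path through `(a, c)` and `(b, d)` splits as `A ++ M ++ B`, where `M` runs from
`(a, c)` to `(b, d)` and is exactly the part of the path inside the box. Translating any
alignment `Q` of the subgrid by `(a, c)` and splicing it in place of `M` gives a spanning path
whose cost is that of `Q` plus a constant and whose type sequence is that of `Q` framed by a
fixed prefix and suffix. So the restriction of an optimal path is optimal in the subgrid, and
the lexicographic comparison with `Q` survives removing the frame: the prefix cancels, and the
suffix does too because two paths with the same endpoints have type sequences of the same
weight (a diagonal step counting twice), so neither is a proper prefix of the other.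
-/

open List

namespace List.Lex

variable {α : Type*} {r : α → α → Prop}

theorem of_append_left [Std.Irrefl r] :
    ∀ {A s t : List α}, Lex r (A ++ s) (A ++ t) → Lex r s t
  | [], _, _, h => h
  | _ :: _, _, _, h => of_append_left (lex_cons_iff.1 h)

theorem of_append_of_not_prefix :
    ∀ {s t T T' : List α}, ¬s <+: t → ¬t <+: s → Lex r (s ++ T) (t ++ T') → Lex r s t
  | [], _, _, _, hst, _, _ => absurd nil_prefix hst
  | _ :: _, [], _, _, _, hts, _ => absurd nil_prefix hts
  | a :: s, b :: t, _, _, hst, hts, h => by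
    rcases cons_lex_cons_iff.1 h with hab | ⟨rfl, h'⟩
    · exact .rel hab
    · exact .cons <| of_append_of_not_prefix (mt (cons_prefix_cons.2 ⟨rfl, ·⟩) hst)
        (mt (cons_prefix_cons.2 ⟨rfl, ·⟩) hts) h'

end List.Lex

def IsGridPath (u v : ℕ × ℕ) (L : List (ℕ × ℕ)) : Prop :=
  L.head? = some u ∧ L.getLast? = some v ∧ L.IsChain GridStep

def typeWeight (k : ℕ) : ℕ := if k = 1 then 2 else 1

section Geometry

variable {p q u v : ℕ × ℕ} {L : List (ℕ × ℕ)}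

theorem GridStep.lt (h : GridStep p q) : p < q := by
  unfold GridStep at h
  rw [Prod.lt_iff]
  omega

theorem gridStep_add_right_iff (t : ℕ × ℕ) : GridStep (p + t) (q + t) ↔ GridStep p q := by
  simp only [GridStep, Prod.fst_add, Prod.snd_add]
  omega

theorem edgeType_add_right (t : ℕ × ℕ) : edgeType (p + t, q + t) = edgeType (p, q) := by
  simp only [edgeType, Prod.fst_add, Prod.snd_add]
  split_ifs <;> omega

theorem typeWeight_edgeType (h : GridStep p q) :
    typeWeight (edgeType (p, q)) + (p.1 + p.2) = q.1 + q.2 := by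
  rcases h with ⟨h₁, h₂⟩ | ⟨h₁, h₂⟩ | ⟨h₁, h₂⟩ <;>
    simp [typeWeight, edgeType, h₁, h₂] <;> omega

@[simp] theorem pathEdges_cons_cons (p q : ℕ × ℕ) (L : List (ℕ × ℕ)) :
    pathEdges (p :: q :: L) = (p, q) :: pathEdges (q :: L) := rfl

theorem IsGridPath.pairwise_lt (h : IsGridPath u v L) : L.Pairwise (· < ·) :=
  isChain_iff_pairwise.1 (h.2.2.imp fun _ _ => GridStep.lt)

theorem IsGridPath.le_of_mem (h : IsGridPath u v L) (hp : p ∈ L) : u ≤ p ∧ p ≤ v := by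
  constructor
  · obtain ⟨L', rfl⟩ := head?_eq_some_iff.1 h.1
    rcases mem_cons.1 hp with rfl | hp
    · exact le_rfl
    · exact ((pairwise_cons.1 h.pairwise_lt).1 p hp).le
  · obtain ⟨L', rfl⟩ := getLast?_eq_some_iff.1 h.2.1
    rcases mem_append.1 hp with hp | hp
    · exact ((pairwise_append.1 h.pairwise_lt).2.2 p hp v (mem_singleton_self v)).le
    · exact (mem_singleton.1 hp).le

theorem IsGridPath.sum_typeWeight (h : IsGridPath u v L) :
    ((typeSeq L).map typeWeight).sum + (u.1 + u.2) = v.1 + v.2 := by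
  induction L generalizing u with
  | nil => simp [IsGridPath] at h
  | cons p L ih =>
    obtain ⟨hu, hv, hL⟩ := h
    obtain rfl : p = u := by simpa using hu
    cases L with
    | nil => simp_all [typeSeq, pathEdges]
    | cons q L =>
      rw [isChain_cons_cons] at hL
      have := ih ⟨rfl, by simpa using hv, hL.2⟩
      have := typeWeight_edgeType hL.1
      simp only [typeSeq, pathEdges_cons_cons, map_cons, sum_cons] at *
      omega

theorem IsGridPath.typeSeq_eq_of_prefix {Q R : List (ℕ × ℕ)} (hQ : IsGridPath u v Q)
    (hR : IsGridPath u v R) (h : typeSeq Q <+: typeSeq R) : typeSeq Q = typeSeq R := by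
  obtain ⟨s, hs⟩ := h
  have hQw := hQ.sum_typeWeight
  have hRw := hR.sum_typeWeight
  rw [← hs] at hRw
  cases s with
  | nil => simpa using hs
  | cons k s =>
    have : 0 < typeWeight k := by unfold typeWeight; split <;> omega
    simp only [map_append, map_cons, sum_append, sum_cons] at hRw
    omega

theorem IsGridPath.typeSeq_eq_or_lex_of_append {Q R : List (ℕ × ℕ)} {T₁ T₂ : List ℕ}
    (hQ : IsGridPath u v Q) (hR : IsGridPath u v R)
    (h : T₁ ++ typeSeq Q ++ T₂ = T₁ ++ typeSeq R ++ T₂ ∨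
      Lex (· < ·) (T₁ ++ typeSeq Q ++ T₂) (T₁ ++ typeSeq R ++ T₂)) :
    typeSeq Q = typeSeq R ∨ Lex (· < ·) (typeSeq Q) (typeSeq R) := by
  rcases h with h | h
  · exact .inl (by simpa using h)
  by_cases heq : typeSeq Q = typeSeq R
  · exact .inl heq
  rw [append_assoc, append_assoc] at h
  exact .inr <| Lex.of_append_of_not_prefix (heq <| hQ.typeSeq_eq_of_prefix hR ·)
    (fun h => heq (hR.typeSeq_eq_of_prefix hQ h).symm) (Lex.of_append_left h)

end Geometry

section Splice

variable {u v s e : ℕ × ℕ} {A B M Q : List (ℕ × ℕ)}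

theorem pathEdges_append_cons (L₁ L₂ : List (ℕ × ℕ)) (u : ℕ × ℕ) :
    pathEdges (L₁ ++ u :: L₂) = pathEdges (L₁ ++ [u]) ++ pathEdges (u :: L₂) := by
  induction L₁ with
  | nil => rfl
  | cons p L ih =>
    cases L with
    | nil => rfl
    | cons q L => simpa using ih

theorem pathEdges_splice (hu : M.head? = some u) (hv : M.getLast? = some v) :
    pathEdges (A ++ M ++ B) =
      pathEdges (A ++ [u]) ++ pathEdges M ++ pathEdges (v :: B) := by
  obtain ⟨M', rfl⟩ := head?_eq_some_iff.1 hu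
  obtain ⟨M'', hM''⟩ := getLast?_eq_some_iff.1 hv
  have hB : u :: (M' ++ B) = M'' ++ v :: B := by
    rw [← cons_append, hM'', append_assoc, singleton_append]
  rw [append_assoc A, cons_append, pathEdges_append_cons, hB, pathEdges_append_cons M'', hM'',
    append_assoc]

theorem typeSeq_splice (hu : M.head? = some u) (hv : M.getLast? = some v) :
    typeSeq (A ++ M ++ B) = typeSeq (A ++ [u]) ++ typeSeq M ++ typeSeq (v :: B) := by
  simp only [typeSeq, pathEdges_splice hu hv, map_append]

theorem pathCost_splice {α : Type*} [DecidableEq α] (x y : List α)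
    (hu : M.head? = some u) (hv : M.getLast? = some v) :
    pathCost x y (A ++ M ++ B) =
      pathCost x y (A ++ [u]) + pathCost x y M + pathCost x y (v :: B) := by
  simp only [pathCost, pathEdges_splice hu hv, countP_append]

theorem IsGridPath.splice (hP : IsGridPath s e (A ++ M ++ B)) (hM : IsGridPath u v M)
    (hQ : IsGridPath u v Q) : IsGridPath s e (A ++ Q ++ B) := by
  obtain ⟨hMu, hMv, -⟩ := hM
  obtain ⟨hQu, hQv, hQ⟩ := hQ
  simp only [IsGridPath, isChain_append, head?_append, getLast?_append, hMu, hMv, hQu,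
    hQv] at hP ⊢
  tauto

end Splice

section Translation

variable {α : Type*} {p q u v : ℕ × ℕ} {L : List (ℕ × ℕ)}

theorem isCostly_add_right_iff (x y : List α) (t : ℕ × ℕ) :
    IsCostly x y (p + t, q + t) ↔ IsCostly (x.drop t.1) (y.drop t.2) (p, q) := by
  simp only [IsCostly, Prod.fst_add, Prod.snd_add, getElem?_drop, add_comm t.1, add_comm t.2]
  refine not_congr (and_congr ?_ (and_congr ?_ Iff.rfl)) <;> omega

theorem isCostly_take_iff (x y : List α) {n : ℕ × ℕ} (hq : q ≤ n) :
    IsCostly (x.take n.1) (y.take n.2) (p, q) ↔ IsCostly x y (p, q) := by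
  have := Prod.mk_le_mk.1 hq
  dsimp only [IsCostly]
  refine not_congr ⟨fun ⟨h₁, h₂, h⟩ => ⟨h₁, h₂, ?_⟩, fun ⟨h₁, h₂, h⟩ => ⟨h₁, h₂, ?_⟩⟩ <;>
    rwa [getElem?_take_of_lt (by omega), getElem?_take_of_lt (by omega)] at *

theorem pathEdges_map (f : ℕ × ℕ → ℕ × ℕ) (L : List (ℕ × ℕ)) :
    pathEdges (L.map f) = (pathEdges L).map (Prod.map f f) := by
  rw [pathEdges, ← map_tail, zip_map, pathEdges]

theorem typeSeq_map_add_right (t : ℕ × ℕ) (L : List (ℕ × ℕ)) :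
    typeSeq (L.map (· + t)) = typeSeq L := by
  simp only [typeSeq, pathEdges_map, map_map]
  exact map_congr_left fun _ _ => edgeType_add_right t

theorem pathCost_map_add_right [DecidableEq α] (x y : List α) (t : ℕ × ℕ) (L : List (ℕ × ℕ)) :
    pathCost x y (L.map (· + t)) = pathCost (x.drop t.1) (y.drop t.2) L := by
  simp only [pathCost, pathEdges_map, countP_map]
  refine countP_congr fun ⟨p, q⟩ _ => ?_
  simp only [Function.comp_apply, decide_eq_true_eq]
  exact isCostly_add_right_iff x y t

theorem pathCost_take [DecidableEq α] (x y : List α) {n : ℕ × ℕ} (hL : ∀ p ∈ L, p ≤ n) :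
    pathCost (x.take n.1) (y.take n.2) L = pathCost x y L := by
  refine countP_congr fun e he => ?_
  have he₂ : e.2 ∈ L := mem_of_mem_tail (of_mem_zip he).2
  simpa using isCostly_take_iff x y (p := e.1) (hL e.2 he₂)

theorem isGridPath_map_add_right_iff (t : ℕ × ℕ) :
    IsGridPath (u + t) (v + t) (L.map (· + t)) ↔ IsGridPath u v L := by
  simp [IsGridPath, head?_map, getLast?_map, isChain_map, gridStep_add_right_iff]

theorem IsGridPath.exists_eq_map_add (h : IsGridPath u v L) :
    ∃ R, L = R.map (· + u) ∧ IsGridPath 0 (v - u) R := by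
  have hL : L = (L.map (· - u)).map (· + u) := by
    rw [map_map]
    conv_lhs => rw [← map_id L]
    exact map_congr_left fun p hp => (tsub_add_cancel_of_le (h.le_of_mem hp).1).symm
  have huv : u ≤ v := (h.le_of_mem (mem_of_mem_head? h.1)).2
  refine ⟨_, hL, (isGridPath_map_add_right_iff u).1 ?_⟩
  rwa [zero_add, tsub_add_cancel_of_le huv, ← hL]

theorem IsGridPath.splice_map_add {s e t n : ℕ × ℕ} {A B Q R : List (ℕ × ℕ)}
    (hP : IsGridPath s e (A ++ R.map (· + t) ++ B)) (hR : IsGridPath 0 n R)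
    (hQ : IsGridPath 0 n Q) : IsGridPath s e (A ++ Q.map (· + t) ++ B) :=
  hP.splice ((isGridPath_map_add_right_iff t).2 hR) ((isGridPath_map_add_right_iff t).2 hQ)

theorem typeSeq_splice_map_add {A B Q : List (ℕ × ℕ)} {n : ℕ × ℕ} (t : ℕ × ℕ)
    (hQ : IsGridPath 0 n Q) :
    typeSeq (A ++ Q.map (· + t) ++ B) =
      typeSeq (A ++ [t]) ++ typeSeq Q ++ typeSeq ((n + t) :: B) := by
  have hQt := (isGridPath_map_add_right_iff t).2 hQ
  rw [zero_add] at hQt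
  rw [typeSeq_splice hQt.1 hQt.2.1, typeSeq_map_add_right]

theorem pathCost_splice_map_add [DecidableEq α] (x y : List α) {A B Q : List (ℕ × ℕ)}
    {a c m n : ℕ} (hQ : IsGridPath 0 (m, n) Q) :
    pathCost x y (A ++ Q.map (· + (a, c)) ++ B) =
      pathCost x y (A ++ [(a, c)]) + pathCost ((x.drop a).take m) ((y.drop c).take n) Q +
        pathCost x y (((m, n) + (a, c)) :: B) := by
  have hQt := (isGridPath_map_add_right_iff (a, c)).2 hQ
  rw [zero_add] at hQt
  rw [pathCost_splice x y hQt.1 hQt.2.1, pathCost_map_add_right,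
    pathCost_take _ _ fun p hp => (hQ.le_of_mem hp).2]

theorem isSpanningPath_take_drop_iff {x y : List α} {a b c d : ℕ} (hbx : b ≤ x.length)
    (hdy : d ≤ y.length) :
    IsSpanningPath ((x.drop a).take (b - a)).length ((y.drop c).take (d - c)).length L ↔
      IsGridPath 0 (b - a, d - c) L := by
  rw [length_take, length_drop, length_take, length_drop, min_eq_left (by omega),
    min_eq_left (by omega)]
  rfl

end Translation

section Decomposition

variable {s e u v : ℕ × ℕ} {P A M B : List (ℕ × ℕ)}

theorem IsGridPath.exists_eq_append (hP : IsGridPath s e P) (hu : u ∈ P) (hv : v ∈ P)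
    (huv : u ≤ v) : ∃ A M B, P = A ++ M ++ B ∧ IsGridPath u v M := by
  obtain ⟨A, P', rfl⟩ := append_of_mem hu
  have hv' : v ∈ u :: P' := by
    refine (mem_append.1 hv).resolve_left fun hvA => ?_
    exact (huv.trans_lt ((pairwise_append.1 hP.pairwise_lt).2.2 v hvA u mem_cons_self)).false
  obtain ⟨M, B, hMB⟩ := append_of_mem hv'
  have hP' : A ++ (M ++ [v]) ++ B = A ++ u :: P' := by simp [hMB]
  refine ⟨A, M ++ [v], B, hP'.symm, ?_, by simp, ?_⟩
  · cases M <;> simp_all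
  · exact hP.2.2.infix ⟨A, B, hP'⟩

theorem restrictShift_eq {a b c d : ℕ} (hP : IsGridPath s e (A ++ M ++ B))
    (hM : IsGridPath (a, c) (b, d) M) :
    restrictShift a b c d (A ++ M ++ B) = M.map (· - (a, c)) := by
  have hlt := hP.pairwise_lt
  simp only [pairwise_append, mem_append] at hlt
  have hA : ∀ p ∈ A, p < (a, c) := fun p hp =>
    hlt.1.2.2 p hp _ (mem_of_mem_head? hM.1)
  have hB : ∀ p ∈ B, (b, d) < p := fun p hp =>
    hlt.2.2 _ (.inr (mem_of_mem_getLast? hM.2.1)) p hp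
  unfold restrictShift
  rw [filter_append, filter_append, filter_eq_nil_iff.2, filter_eq_self.2, filter_eq_nil_iff.2]
  · simp only [nil_append, append_nil]
    rfl
  all_goals intro p hp; simp only [decide_eq_true_eq]
  · have := Prod.lt_iff.1 (hB p hp); omega
  · have := hM.le_of_mem hp; simp only [Prod.le_def] at this; omega
  · have := Prod.lt_iff.1 (hA p hp); omega

end Decomposition

theorem canonical_restriction_general {α : Type*} [DecidableEq α] (x y : List α)
    (P : List (ℕ × ℕ)) (hP : IsCanonical x y P)
    (a b c d : ℕ) (hab : a ≤ b) (hcd : c ≤ d)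
    (hmem1 : (a, c) ∈ P) (hmem2 : (b, d) ∈ P) :
    IsCanonical ((x.drop a).take (b - a)) ((y.drop c).take (d - c))
      (restrictShift a b c d P) := by
  obtain ⟨hPspan, hopt, hlex⟩ := hP
  have hP : IsGridPath (0, 0) (x.length, y.length) P := hPspan
  obtain ⟨hbx, hdy⟩ := Prod.mk_le_mk.1 (hP.le_of_mem hmem2).2
  obtain ⟨A, M, B, rfl, hM⟩ := hP.exists_eq_append hmem1 hmem2 (Prod.mk_le_mk.2 ⟨hab, hcd⟩)
  rw [restrictShift_eq hP hM]
  obtain ⟨R, rfl, hR⟩ := hM.exists_eq_map_add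
  replace hR : IsGridPath 0 (b - a, d - c) R := hR
  simp only [map_map, Function.comp_def, add_tsub_cancel_right, map_id', IsCanonical,
    isSpanningPath_take_drop_iff hbx hdy]
  refine ⟨hR, fun Q hQ => ?_, fun Q hQ hcost => ?_⟩
  · have := hopt _ (hP.splice_map_add hR hQ)
    rw [pathCost_splice_map_add x y hR, pathCost_splice_map_add x y hQ] at this
    omega
  · have := hlex _ (hP.splice_map_add hR hQ) (by
      rw [pathCost_splice_map_add x y hR, pathCost_splice_map_add x y hQ]
      omega)
    rw [typeSeq_splice_map_add _ hR, typeSeq_splice_map_add _ hQ] at this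
    exact hQ.typeSeq_eq_or_lex_of_append hR this

/-- If a box `(a,b] × (c,d]` is compatible with the canonical alignment of `x` and `y`
(the canonical alignment passes through `(a,c)` and `(b,d)`), then its restriction to
the box equals the canonical alignment of the corresponding subgrid, i.e. it is the
canonical alignment of the substrings `x_{(a,b]}` and `y_{(c,d]}`. -/
theorem canonical_restriction {α : Type*} [DecidableEq α] (x y : List α)
    (P : List (ℕ × ℕ)) (hP : IsCanonical x y P)
    (a b c d : ℕ) (hab : a ≤ b) (hbx : b ≤ x.length) (hcd : c ≤ d) (hdy : d ≤ y.length)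
    (hmem1 : (a, c) ∈ P) (hmem2 : (b, d) ∈ P) :
    IsCanonical ((x.drop a).take (b - a)) ((y.drop c).take (d - c))
      (restrictShift a b c d P) :=
  canonical_restriction_general x y P hP a b c d hab hcd hmem1 hmem2
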